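/- The map of flows R: {0,1} → {0} has the right lifting property with respect to every map of cof(I^gl ∪ {C}); that is, every map of flows belonging to cof(I^gl ∪ {C}) has the left lifting property with respect to R. -/

import Mathlib

open CategoryTheory

noncomputable section

/-! ### Flows: small semicategories enriched in topological spaces -/

structure DFlow : Type 1 where
  States : Type
  Path : States → States → Type
  str : ∀ α β, TopologicalSpace (Path α β)
  comp : ∀ {α β γ : States}, Path α β → Path β γ → Path α γ
  continuous_comp : ∀ α β γ, Continuous (fun p : Path α β × Path β γ => comp p.1 p.2)
  assoc : ∀ {α β γ δ : States} (x : Path α β) (y : Path β γ) (z : Path γ δ),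
    comp (comp x y) z = comp x (comp y z)

attribute [instance] DFlow.str

/-- Morphisms of flows. -/
structure FlowHom (X Y : DFlow) where
  toFun : X.States → Y.States
  map : ∀ {α β : X.States}, X.Path α β → Y.Path (toFun α) (toFun β)
  continuous_map : ∀ α β : X.States, Continuous fun p : X.Path α β => map p
  map_comp : ∀ {α β γ : X.States} (x : X.Path α β) (y : X.Path β γ),
    map (X.comp x y) = Y.comp (map x) (map y)

instance : Category DFlow where
  Hom := FlowHom
  id X := ⟨id, fun p => p, fun _ _ => continuous_id, fun _ _ => rfl⟩
  comp f g := ⟨g.toFun ∘ f.toFun, fun p => g.map (f.map p),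
    fun α β => (g.continuous_map _ _).comp (f.continuous_map _ _),
    fun x y => by simp only [f.map_comp, g.map_comp]⟩

lemma continuous_of_isEmpty {X Y : Type} [TopologicalSpace X] [TopologicalSpace Y]
    (h : IsEmpty X) (f : X → Y) : Continuous f :=
  continuous_iff_continuousAt.mpr fun x => h.elim x

/-- A set viewed as a flow with empty spaces of execution paths. -/
def DFlow.ofSet (S : Type) : DFlow where
  States := S
  Path _ _ := Empty
  str _ _ := ⊥
  comp x _ := x.elim
  continuous_comp _ _ _ := continuous_of_isEmpty (inferInstanceAs (IsEmpty (Empty × Empty))) _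
  assoc x _ _ := x.elim

/-- The empty flow. -/
def emptyFlow : DFlow := DFlow.ofSet Empty

/-- The flow `{0}` with one state and no execution path. -/
def pointFlow : DFlow := DFlow.ofSet PUnit

/-- The flow `{0, 1}` with two states and no execution path. -/
def twoFlow : DFlow := DFlow.ofSet Bool

/-- The terminal flow. -/
def terminalFlow : DFlow where
  States := PUnit
  Path _ _ := PUnit
  str _ _ := ⊥
  comp _ _ := PUnit.unit
  continuous_comp _ _ _ := continuous_const
  assoc _ _ _ := rfl

/-- The map of flows `C : ∅ → {0}`. -/
def Cmap : emptyFlow ⟶ pointFlow :=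
  ⟨fun x => x.elim, fun {α} _ _ => α.elim, fun α _ => α.elim, fun {α} _ _ _ _ => α.elim⟩

/-- The map of flows `R : {0,1} → {0}`. -/
def Rmap : twoFlow ⟶ pointFlow :=
  ⟨fun _ => PUnit.unit, fun p => p.elim, fun _ _ => @continuous_of_isEmpty _ _ (twoFlow.str _ _) (pointFlow.str _ _) (inferInstanceAs (IsEmpty Empty)) _, fun x _ => x.elim⟩

/-- The map of flows `C⁺ : {0} → {0,1}`. -/
def Cplus : pointFlow ⟶ twoFlow :=
  ⟨fun _ => false, fun p => p.elim, fun _ _ => @continuous_of_isEmpty _ _ (pointFlow.str _ _) (twoFlow.str _ _) (inferInstanceAs (IsEmpty Empty)) _, fun x _ => x.elim⟩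

/-- The canonical map from the empty flow. -/
def DFlow.fromEmpty (X : DFlow) : emptyFlow ⟶ X :=
  ⟨fun x => x.elim, fun {α} _ => α.elim, fun α _ => α.elim, fun {α} _ _ _ _ => α.elim⟩

/-- The canonical map to the terminal flow. -/
def DFlow.toTerminal (X : DFlow) : X ⟶ terminalFlow :=
  ⟨fun _ => PUnit.unit, fun _ => PUnit.unit, fun _ _ => @continuous_const _ _ (X.str _ _) (terminalFlow.str _ _) _, fun _ _ => rfl⟩

/-! ### Globes -/

/-- The path spaces of the globe `Glob(Z)`. -/
def GlobPath (Z : Type) : Bool → Bool → Type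
  | false, true => Z
  | _, _ => Empty

instance globPathTop (Z : Type) [TopologicalSpace Z] :
    ∀ a b, TopologicalSpace (GlobPath Z a b)
  | false, true => inferInstanceAs (TopologicalSpace Z)
  | false, false => ⊥
  | true, false => ⊥
  | true, true => ⊥

instance globPathIsEmpty (Z : Type) : ∀ (a : Bool), IsEmpty (GlobPath Z a a)
  | false => inferInstanceAs (IsEmpty Empty)
  | true => inferInstanceAs (IsEmpty Empty)

/-- The globe of a topological space. -/
def DFlow.glob (Z : Type) [TopologicalSpace Z] : DFlow where
  States := Bool
  Path := GlobPath Z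
  str := globPathTop Z
  comp {a b c} x y :=
    match a, b, c, x, y with
    | false, false, _, x, _ => x.elim
    | false, true, false, _, y => y.elim
    | false, true, true, _, y => y.elim
    | true, false, _, x, _ => x.elim
    | true, true, _, x, _ => x.elim
  continuous_comp a b c :=
    match a, b, c with
    | false, false, false => continuous_of_isEmpty ⟨fun p => p.1.elim⟩ _
    | false, false, true => continuous_of_isEmpty ⟨fun p => p.1.elim⟩ _
    | false, true, false => continuous_of_isEmpty ⟨fun p => p.2.elim⟩ _
    | false, true, true => continuous_of_isEmpty ⟨fun p => p.2.elim⟩ _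
    | true, false, false => continuous_of_isEmpty ⟨fun p => p.1.elim⟩ _
    | true, false, true => continuous_of_isEmpty ⟨fun p => p.1.elim⟩ _
    | true, true, false => continuous_of_isEmpty ⟨fun p => p.1.elim⟩ _
    | true, true, true => continuous_of_isEmpty ⟨fun p => p.1.elim⟩ _
  assoc {a b c d} x y z :=
    match a, b, c, d, x, y, z with
    | false, false, _, _, x, _, _ => x.elim
    | false, true, false, _, _, y, _ => y.elim
    | false, true, true, false, _, y, _ => y.elim
    | false, true, true, true, _, y, _ => y.elim
    | true, _, _, _, x, _, _ => x.elim

/-- The functorial action of `Glob` on a continuous map. -/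
def DFlow.globMap {Z W : Type} [TopologicalSpace Z] [TopologicalSpace W] (f : Z → W)
    (hf : Continuous f) : DFlow.glob Z ⟶ DFlow.glob W where
  toFun := id
  map {a b} x :=
    match a, b, x with
    | false, true, x => f x
    | false, false, x => x.elim
    | true, false, x => x.elim
    | true, true, x => x.elim
  continuous_map a b :=
    match a, b with
    | false, true => hf
    | false, false => @continuous_of_isEmpty _ _ ((DFlow.glob Z).str false false) ((DFlow.glob W).str false false) (inferInstanceAs (IsEmpty Empty)) _
    | true, false => @continuous_of_isEmpty _ _ ((DFlow.glob Z).str true false) ((DFlow.glob W).str true false) (inferInstanceAs (IsEmpty Empty)) _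
    | true, true => @continuous_of_isEmpty _ _ ((DFlow.glob Z).str true true) ((DFlow.glob W).str true true) (inferInstanceAs (IsEmpty Empty)) _
  map_comp {a b c} x y :=
    match a, b, c, x, y with
    | false, false, _, x, _ => x.elim
    | false, true, false, _, y => y.elim
    | false, true, true, _, y => y.elim
    | true, _, _, x, _ => x.elim

/-- The directed segment, the globe of a one-point space. -/
def Iseg : DFlow := DFlow.glob PUnit

/-! ### Disks and spheres -/

/-- The `n`-dimensional disk `D^n`. -/
def gDisk (n : ℕ) : Type := (Metric.closedBall (0 : EuclideanSpace ℝ (Fin n)) 1 : Set _)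

/-- The sphere `S^{n-1}`, boundary of the `n`-dimensional disk. -/
def gSphere (n : ℕ) : Type := (Metric.sphere (0 : EuclideanSpace ℝ (Fin n)) 1 : Set _)

instance (n : ℕ) : TopologicalSpace (gDisk n) :=
  inferInstanceAs (TopologicalSpace (Metric.closedBall (0 : EuclideanSpace ℝ (Fin n)) 1))

instance (n : ℕ) : TopologicalSpace (gSphere n) :=
  inferInstanceAs (TopologicalSpace (Metric.sphere (0 : EuclideanSpace ℝ (Fin n)) 1))

/-- The inclusion `S^{n-1} ⊆ D^n`. -/
def sphereIncl (n : ℕ) : gSphere n → gDisk n :=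
  fun x => ⟨x.1, Metric.sphere_subset_closedBall x.2⟩

lemma continuous_sphereIncl (n : ℕ) : Continuous (sphereIncl n) :=
  Continuous.subtype_mk continuous_subtype_val _

/-- The generating cofibration `c_n : Glob(S^{n-1}) → Glob(D^n)`. -/
def cFlow (n : ℕ) : DFlow.glob (gSphere n) ⟶ DFlow.glob (gDisk n) :=
  DFlow.globMap (sphereIncl n) (continuous_sphereIncl n)

/-- `{0}` as a subspace of `ℝ`. -/
def zeroSpace : Type := ({(0 : ℝ)} : Set ℝ)

instance : TopologicalSpace zeroSpace := inferInstanceAs (TopologicalSpace ({(0:ℝ)} : Set ℝ))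

/-- The inclusion `D^n × {0} → D^n × [0,1]`. -/
def cylIncl (n : ℕ) : gDisk n × zeroSpace → gDisk n × unitInterval :=
  fun p => (p.1, ⟨p.2.1, by
    rcases p.2 with ⟨x, hx⟩
    simp only [Set.mem_singleton_iff] at hx
    subst hx
    exact unitInterval.zero_mem⟩)

lemma continuous_cylIncl (n : ℕ) : Continuous (cylIncl n) :=
  continuous_fst.prodMk (Continuous.subtype_mk (continuous_subtype_val.comp continuous_snd) _)

/-- The generating trivial cofibration `Glob(D^n × {0}) → Glob(D^n × [0,1])`. -/
def jFlow (n : ℕ) : DFlow.glob (gDisk n × zeroSpace) ⟶ DFlow.glob (gDisk n × unitInterval) :=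
  DFlow.globMap (cylIncl n) (continuous_cylIncl n)

/-! ### Generating sets of maps, as morphism properties -/

/-- The set `I^gl = {c_n : Glob(S^{n-1}) → Glob(D^n) | n ≥ 0}`. -/
def Igl : MorphismProperty DFlow := fun X Y f =>
  ∃ n : ℕ, X = DFlow.glob (gSphere n) ∧ Y = DFlow.glob (gDisk n) ∧ HEq f (cFlow n)

/-- The set `I^gl_{≥1} = {c_n | n ≥ 1}`. -/
def IglGeOne : MorphismProperty DFlow := fun X Y f =>
  ∃ n : ℕ, 1 ≤ n ∧ X = DFlow.glob (gSphere n) ∧ Y = DFlow.glob (gDisk n) ∧ HEq f (cFlow n)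

/-- The set `J^gl`. -/
def Jgl : MorphismProperty DFlow := fun X Y f =>
  ∃ n : ℕ, X = DFlow.glob (gDisk n × zeroSpace) ∧ Y = DFlow.glob (gDisk n × unitInterval) ∧
    HEq f (jFlow n)

/-- The singleton `{C}`. -/
def Cprop : MorphismProperty DFlow := fun X Y f =>
  X = emptyFlow ∧ Y = pointFlow ∧ HEq f Cmap

/-- The singleton `{R}`. -/
def Rprop : MorphismProperty DFlow := fun X Y f =>
  X = twoFlow ∧ Y = pointFlow ∧ HEq f Rmap

/-- The set `I^gl ∪ {C}`. -/
def IglC : MorphismProperty DFlow := fun _ _ f => Igl f ∨ Cprop f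

/-- The set `I^gl ∪ {C, R}`, generating cofibrations of the q-model structure. -/
def IglCR : MorphismProperty DFlow := fun _ _ f => Igl f ∨ Cprop f ∨ Rprop f

/-! ### Lifting properties, cofibration and injectivity classes -/

/-- `rlpClass S` is `inj(S)`: maps with the RLP with respect to every map of `S`. -/
def rlpClass {M : Type _} [Category M] (S : MorphismProperty M) : MorphismProperty M :=
  fun _ _ p => ∀ {A B : M} (i : A ⟶ B), S i → HasLiftingProperty i p

/-- `llpClass S`: maps with the LLP with respect to every map of `S`. -/
def llpClass {M : Type _} [Category M] (S : MorphismProperty M) : MorphismProperty M :=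
  fun _ _ i => ∀ {A B : M} (p : A ⟶ B), S p → HasLiftingProperty i p

/-- `cofClass S` is `cof(S) = llp(inj(S))`. -/
def cofClass {M : Type _} [Category M] (S : MorphismProperty M) : MorphismProperty M :=
  llpClass (rlpClass S)

/-! ### Model structures -/

/-- A model structure on a category, specified by its weak equivalences,
cofibrations and fibrations. -/
structure ModelStructure (M : Type _) [Category M] where
  W : MorphismProperty M
  C : MorphismProperty M
  F : MorphismProperty M
  w_comp : ∀ {X Y Z : M} (f : X ⟶ Y) (g : Y ⟶ Z), W f → W g → W (f ≫ g)
  w_cancel_left : ∀ {X Y Z : M} (f : X ⟶ Y) (g : Y ⟶ Z), W f → W (f ≫ g) → W g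
  w_cancel_right : ∀ {X Y Z : M} (f : X ⟶ Y) (g : Y ⟶ Z), W g → W (f ≫ g) → W f
  w_retract : ∀ {X Y X' Y' : M} (f : X ⟶ Y) (g : X' ⟶ Y') (iX : X ⟶ X') (rX : X' ⟶ X)
    (iY : Y ⟶ Y') (rY : Y' ⟶ Y), iX ≫ rX = 𝟙 X → iY ≫ rY = 𝟙 Y →
    iX ≫ g = f ≫ iY → g ≫ rY = rX ≫ f → W g → W f
  cof_eq : C = llpClass (fun _ _ p => F p ∧ W p)
  fib_eq : F = rlpClass (fun _ _ i => C i ∧ W i)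
  factor_triv_cof : ∀ {X Y : M} (f : X ⟶ Y),
    ∃ (Z : M) (i : X ⟶ Z) (p : Z ⟶ Y), C i ∧ W i ∧ F p ∧ i ≫ p = f
  factor_triv_fib : ∀ {X Y : M} (f : X ⟶ Y),
    ∃ (Z : M) (i : X ⟶ Z) (p : Z ⟶ Y), C i ∧ F p ∧ W p ∧ i ≫ p = f

/-! ### The class of weak equivalences `W̄_DK` -/

/-- A flow "is a set": it has no execution path. -/
def DFlow.IsSetFlow (X : DFlow) : Prop := ∀ α β : X.States, IsEmpty (X.Path α β)

/-- A flow has at least one execution path. -/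
def DFlow.HasExecPath (X : DFlow) : Prop := ∃ α β : X.States, Nonempty (X.Path α β)

/-- The class `W̄_DK` of maps of flows. -/
def WbarDK : MorphismProperty DFlow := fun X Y _ =>
  (IsEmpty X.States ∧ IsEmpty Y.States) ∨
  (Nonempty X.States ∧ Nonempty Y.States ∧ X.IsSetFlow ∧ Y.IsSetFlow) ∨
  (X.HasExecPath ∧ Y.HasExecPath)

/-! ### Binary coproducts of flows -/

/-- Path spaces of the coproduct of two flows. -/
def SumPath (X Y : DFlow) : X.States ⊕ Y.States → X.States ⊕ Y.States → Type
  | .inl a, .inl b => X.Path a b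
  | .inr a, .inr b => Y.Path a b
  | _, _ => Empty

instance sumPathTop (X Y : DFlow) : ∀ a b, TopologicalSpace (SumPath X Y a b)
  | .inl a, .inl b => inferInstanceAs (TopologicalSpace (X.Path a b))
  | .inr a, .inr b => inferInstanceAs (TopologicalSpace (Y.Path a b))
  | .inl _, .inr _ => ⊥
  | .inr _, .inl _ => ⊥

/-- The coproduct of two flows. -/
def DFlow.sum (X Y : DFlow) : DFlow where
  States := X.States ⊕ Y.States
  Path := SumPath X Y
  str := sumPathTop X Y
  comp {a b c} x y :=
    match a, b, c, x, y with
    | .inl _, .inl _, .inl _, x, y => X.comp x y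
    | .inr _, .inr _, .inr _, x, y => Y.comp x y
    | .inl _, .inl _, .inr _, _, y => y.elim
    | .inl _, .inr _, _, x, _ => x.elim
    | .inr _, .inl _, _, x, _ => x.elim
    | .inr _, .inr _, .inl _, _, y => y.elim
  continuous_comp a b c :=
    match a, b, c with
    | .inl _, .inl _, .inl _ => X.continuous_comp _ _ _
    | .inr _, .inr _, .inr _ => Y.continuous_comp _ _ _
    | .inl _, .inl _, .inr _ => continuous_of_isEmpty ⟨fun p => p.2.elim⟩ _
    | .inl _, .inr _, _ => continuous_of_isEmpty ⟨fun p => p.1.elim⟩ _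
    | .inr _, .inl _, _ => continuous_of_isEmpty ⟨fun p => p.1.elim⟩ _
    | .inr _, .inr _, .inl _ => continuous_of_isEmpty ⟨fun p => p.2.elim⟩ _
  assoc {a b c d} x y z :=
    match a, b, c, d, x, y, z with
    | .inl _, .inl _, .inl _, .inl _, x, y, z => X.assoc x y z
    | .inr _, .inr _, .inr _, .inr _, x, y, z => Y.assoc x y z
    | .inl _, .inl _, .inl _, .inr _, _, _, z => z.elim
    | .inl _, .inl _, .inr _, _, _, y, _ => y.elim
    | .inl _, .inr _, _, _, x, _, _ => x.elim
    | .inr _, .inl _, _, _, x, _, _ => x.elim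
    | .inr _, .inr _, .inl _, _, _, y, _ => y.elim
    | .inr _, .inr _, .inr _, .inl _, _, _, z => z.elim

/-- The coproduct of two maps of flows. -/
def DFlow.sumMap {X X' Y Y' : DFlow} (f : X ⟶ X') (g : Y ⟶ Y') : X.sum Y ⟶ X'.sum Y' where
  toFun := Sum.map f.toFun g.toFun
  map {a b} x :=
    match a, b, x with
    | .inl _, .inl _, x => f.map x
    | .inr _, .inr _, x => g.map x
    | .inl _, .inr _, x => x.elim
    | .inr _, .inl _, x => x.elim
  continuous_map a b :=
    match a, b with
    | .inl _, .inl _ => f.continuous_map _ _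
    | .inr _, .inr _ => g.continuous_map _ _
    | .inl _, .inr _ => @continuous_of_isEmpty _ _ ((X.sum Y).str _ _) ((X'.sum Y').str _ _) (inferInstanceAs (IsEmpty Empty)) _
    | .inr _, .inl _ => @continuous_of_isEmpty _ _ ((X.sum Y).str _ _) ((X'.sum Y').str _ _) (inferInstanceAs (IsEmpty Empty)) _
  map_comp {a b c} x y :=
    match a, b, c, x, y with
    | .inl _, .inl _, .inl _, x, y => f.map_comp x y
    | .inr _, .inr _, .inr _, x, y => g.map_comp x y
    | .inl _, .inl _, .inr _, _, y => y.elim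
    | .inl _, .inr _, _, x, _ => x.elim
    | .inr _, .inl _, _, x, _ => x.elim
    | .inr _, .inr _, .inl _, _, y => y.elim

/-- The map `c₀⁺ = id_{I⃗} ⊔ c₀ : I⃗ ⊔ Glob(S^{-1}) → I⃗ ⊔ Glob(D⁰)`. -/
def cZeroPlus : Iseg.sum (DFlow.glob (gSphere 0)) ⟶ Iseg.sum (DFlow.glob (gDisk 0)) :=
  DFlow.sumMap (𝟙 Iseg) (cFlow 0)

/-- The singleton `{C⁺}`. -/
def CplusProp : MorphismProperty DFlow := fun X Y f =>
  X = pointFlow ∧ Y = twoFlow ∧ HEq f Cplus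

/-- The singleton `{c₀⁺}`. -/
def cZeroPlusProp : MorphismProperty DFlow := fun X Y f =>
  X = Iseg.sum (DFlow.glob (gSphere 0)) ∧ Y = Iseg.sum (DFlow.glob (gDisk 0)) ∧ HEq f cZeroPlus

/-- The set `{C⁺, c₀⁺} ∪ J^gl ∪ I^gl_{≥1}`. -/
def TrivCofGen : MorphismProperty DFlow := fun _ _ f =>
  CplusProp f ∨ cZeroPlusProp f ∨ Jgl f ∨ IglGeOne f

/-! Since `cof(S) = llp(inj(S))`, it suffices that `R ∈ inj(I^gl ∪ {C})`. Against `c_n` the lifting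
problem is vacuous: `D^n` is nonempty and `{0}` has no execution path, so there is no map
`Glob(D^n) → {0}`. Against `C` a lift is any choice of a state over `0`, which exists as `R` is
surjective on states. -/

lemma FlowHom.ext_of_isSetFlow {X Y : DFlow} (hX : X.IsSetFlow) {f g : X ⟶ Y}
    (h : f.toFun = g.toFun) : f = g := by
  obtain ⟨tf, mf, _, _⟩ := f
  obtain ⟨tg, mg, _, _⟩ := g
  obtain rfl : tf = tg := h
  obtain rfl : @mf = @mg := by
    funext α β p
    exact (hX α β).elim p
  rfl

lemma DFlow.ofSet_isSetFlow (S : Type) : (DFlow.ofSet S).IsSetFlow :=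
  fun _ _ => inferInstanceAs (IsEmpty Empty)

def DFlow.homOfSet {S : Type} {X : DFlow} (g : S → X.States) : DFlow.ofSet S ⟶ X :=
  ⟨g, fun p => p.elim, fun _ _ => @continuous_of_isEmpty _ _ ((DFlow.ofSet S).str _ _) _
    (inferInstanceAs (IsEmpty Empty)) _, fun x _ => x.elim⟩

lemma DFlow.isEmpty_hom_glob_ofSet (Z S : Type) [TopologicalSpace Z] [Nonempty Z] :
    IsEmpty (DFlow.glob Z ⟶ DFlow.ofSet S) :=
  ⟨fun v => (@FlowHom.map _ _ v false true (Classical.arbitrary Z)).elim⟩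

instance (n : ℕ) : Nonempty (gDisk n) := ⟨⟨0, Metric.mem_closedBall_self zero_le_one⟩⟩

lemma CategoryTheory.HasLiftingProperty.of_isEmpty_hom {C : Type*} [Category C] {A B X Y : C}
    (i : A ⟶ B) (p : X ⟶ Y) [IsEmpty (B ⟶ Y)] : HasLiftingProperty i p :=
  ⟨fun {_ v} _ => (IsEmpty.false v).elim⟩

lemma hasLiftingProperty_Cmap {E B : DFlow} (p : E ⟶ B) (hp : Function.Surjective p.toFun) :
    HasLiftingProperty Cmap p := by
  refine ⟨fun {_ v} _ => ?_⟩
  obtain ⟨e, he⟩ := hp (v.toFun PUnit.unit)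
  refine ⟨⟨⟨DFlow.homOfSet (S := PUnit) fun _ => e, ?_, ?_⟩⟩⟩
  · exact FlowHom.ext_of_isSetFlow (DFlow.ofSet_isSetFlow Empty) (funext fun x => x.elim)
  · exact FlowHom.ext_of_isSetFlow (DFlow.ofSet_isSetFlow PUnit) (funext fun _ => he)

lemma rlpClass_IglC_Rmap : rlpClass IglC Rmap := by
  rintro A B i (⟨n, rfl, rfl, hi⟩ | ⟨rfl, rfl, hi⟩) <;> obtain rfl := eq_of_heq hi
  · have : IsEmpty (DFlow.glob (gDisk n) ⟶ pointFlow) := DFlow.isEmpty_hom_glob_ofSet _ _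
    exact HasLiftingProperty.of_isEmpty_hom _ _
  · exact hasLiftingProperty_Cmap Rmap fun _ => ⟨false, rfl⟩

/-- the map of flows `R : {0,1} → {0}` has the right lifting property
with respect to every map of `cof(I^gl ∪ {C})`. -/
theorem hasLiftingProperty_cof_Rmap {X Y : DFlow} (f : X ⟶ Y) (hf : cofClass IglC f) :
    HasLiftingProperty f Rmap := hf Rmap rlpClass_IglC_Rmap
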